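/- arXiv:1510.01178 — 4 statements merged into one kernel-verified Lean document; each statement's English description precedes it below -/
import Mathlib

section
/- Let (A_n)_{n∈ℕ} be an inverse system of complete nonarchimedean normed abelian groups (Banach groups) over a nonarchimedean field, with contractive transition maps σ_{n+1,n} : A_{n+1} → A_n, such that there is an abelian group A with compatible maps τ_n : A → A_n having dense image in each A_n. Then the map φ : ∏_n A_n → ∏_n A_n, (a_n) ↦ (a_n - σ_{n+1,n}(a_{n+1})), is surjective (i.e. lim←¹ A_n = 0). -/
/-- Cast between fibers of a family of groups along an equality of indices. -/
def castHom (B : ℕ → Type*) [∀ n, AddCommGroup (B n)] {a b : ℕ} (h : a = b) :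
    B a →+ B b := h ▸ AddMonoidHom.id (B a)

lemma castHom_apply_family (B : ℕ → Type*) [∀ n, AddCommGroup (B n)]
    {a b : ℕ} (h : a = b) (f : ∀ n, B n) : castHom B h (f a) = f b := by
  subst h; rfl

lemma norm_castHom (B : ℕ → Type*) [∀ n, NormedAddCommGroup (B n)]
    {a b : ℕ} (h : a = b) (x : B a) : ‖castHom B h x‖ = ‖x‖ := by
  subst h; rfl

/-- Iterated transition maps `B (n + k) →+ B n`. -/
def chain (B : ℕ → Type*) [∀ n, AddCommGroup (B n)] (σ : ∀ n, B (n + 1) →+ B n) :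
    ∀ (k n : ℕ), B (n + k) →+ B n
  | 0, _ => AddMonoidHom.id _
  | k+1, n => ((σ n).comp (chain B σ k (n+1))).comp (castHom B (by omega))

lemma norm_chain_le (B : ℕ → Type*) [∀ n, NormedAddCommGroup (B n)]
    (σ : ∀ n, B (n + 1) →+ B n) (hcontr : ∀ n, ∀ x : B (n + 1), ‖σ n x‖ ≤ ‖x‖) :
    ∀ (k n : ℕ) (x : B (n + k)), ‖chain B σ k n x‖ ≤ ‖x‖
  | 0, n, x => le_refl _
  | k+1, n, x => by
    simp only [chain, AddMonoidHom.comp_apply]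
    calc ‖σ n (chain B σ k (n+1) (castHom B (by omega) x))‖
        ≤ ‖chain B σ k (n+1) (castHom B (by omega) x)‖ := hcontr _ _
      _ ≤ ‖castHom B (by omega : n + (k+1) = (n+1) + k) x‖ :=
          norm_chain_le B σ hcontr k (n+1) _
      _ = ‖x‖ := norm_castHom B _ x

/-- For an inverse system of complete nonarchimedean normed abelian groups with contractive
transition maps, admitting a compatible family of maps with dense images from a fixed abelian
group, the map `φ : ∏ₙ Aₙ → ∏ₙ Aₙ`, `(aₙ) ↦ (aₙ - σₙ₊₁,ₙ(aₙ₊₁))`, is surjective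
(i.e. `lim¹ Aₙ = 0`). -/
theorem stmt_1 (A : Type*) [AddCommGroup A]
    (B : ℕ → Type*) [∀ n, NormedAddCommGroup (B n)] [∀ n, CompleteSpace (B n)]
    (hna : ∀ n, ∀ x y : B n, ‖x + y‖ ≤ max ‖x‖ ‖y‖)
    (σ : ∀ n, B (n + 1) →+ B n)
    (hcontr : ∀ n, ∀ x : B (n + 1), ‖σ n x‖ ≤ ‖x‖)
    (τ : ∀ n, A →+ B n)
    (hcompat : ∀ n, ∀ a : A, σ n (τ (n + 1) a) = τ n a)
    (hdense : ∀ n, DenseRange (τ n)) :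
    Function.Surjective
      (fun a : ∀ n, B n => (fun n => a n - σ n (a (n + 1)) : ∀ n, B n)) := by
  intro b
  -- choose approximations with errors going to 0 geometrically
  have ht : ∀ n, ∃ t : A, ‖b n - τ n t‖ < (1/2 : ℝ)^n := by
    intro n
    obtain ⟨t, h⟩ := (hdense n).exists_dist_lt (b n) (by positivity : (0:ℝ) < (1/2)^n)
    exact ⟨t, by rwa [dist_eq_norm] at h⟩
  choose t htlt using ht
  set b' : ∀ n, B n := fun n => b n - τ n (t n) with hb'
  have hcont : ∀ n, Continuous (σ n) := fun n =>
    AddMonoidHomClass.continuous_of_bound (σ n) 1 (fun x => by simpa using hcontr n x)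
  have hsum : ∀ n, Summable (fun k => chain B σ k n (b' (n + k))) := by
    intro n
    apply Summable.of_norm_bounded (g := fun k => (1/2:ℝ)^n * (1/2:ℝ)^k)
    · exact (summable_geometric_of_lt_one (by norm_num) (by norm_num : (1/2:ℝ) < 1)).mul_left _
    · intro k
      calc ‖chain B σ k n (b' (n + k))‖ ≤ ‖b' (n + k)‖ := norm_chain_le B σ hcontr k n _
        _ ≤ (1/2:ℝ)^(n+k) := le_of_lt (htlt (n+k))
        _ = (1/2:ℝ)^n * (1/2:ℝ)^k := pow_add _ _ _
  set a' : ∀ n, B n := fun n => ∑' k, chain B σ k n (b' (n + k)) with ha'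
  have key : ∀ n, a' n - σ n (a' (n+1)) = b' n := by
    intro n
    have hmap : σ n (a' (n+1)) = ∑' k, chain B σ (k+1) n (b' (n + (k+1))) := by
      rw [← ((hsum (n+1)).hasSum.map (σ n) (hcont n)).tsum_eq]
      apply tsum_congr
      intro k
      show σ n (chain B σ k (n+1) (b' ((n+1)+k))) = chain B σ (k+1) n (b' (n+(k+1)))
      simp only [chain, AddMonoidHom.comp_apply]
      rw [castHom_apply_family B (by omega) b']
    rw [hmap]
    have := Summable.tsum_eq_zero_add (hsum n)
    simp only [chain, AddMonoidHom.id_apply] at this ⊢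
    rw [show a' n = ∑' k, chain B σ k n (b' (n + k)) from rfl, this]
    simp [chain]
  -- accumulate the corrections
  set s : ℕ → A := fun n => -((Finset.range n).sum t) with hs
  refine ⟨fun n => a' n + τ n (s n), ?_⟩
  funext n
  show a' n + τ n (s n) - σ n (a' (n+1) + τ (n+1) (s (n+1))) = b n
  have hτs : τ n (s n) - τ n (s (n+1)) = τ n (t n) := by
    rw [← map_sub]
    congr 1
    simp [hs, Finset.sum_range_succ]
  rw [map_add, hcompat]
  have : a' n + τ n (s n) - (σ n (a' (n+1)) + τ n (s (n+1)))
      = (a' n - σ n (a' (n+1))) + (τ n (s n) - τ n (s (n+1))) := by abel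
  rw [this, key, hτs]
  exact sub_add_cancel _ _
end

section
/- Let A be a commutative Noetherian ring and I = (f_1, …, f_n) an ideal of A. Then the I-adic completion of A is isomorphic as an A-algebra to the quotient A[[ρ_1, …, ρ_n]] / (f_1 - ρ_1, …, f_n - ρ_n) of the formal power series ring in n variables over A. -/
/-!
Substituting `Xᵢ ↦ fᵢ` into the truncations of a power series gives compatible maps
`A⟦X⟧ → A ⧸ I ^ k`, hence an `A`-algebra map `ψ : A⟦X⟧ → Â`. It is surjective because an
`I`-adic Cauchy sequence in `A` lifts term by term to an `(X)`-adic Cauchy sequence of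
polynomials, which converges in the complete ring `A⟦X⟧`. Its kernel contains
`J = (fᵢ - Xᵢ)`, as `p ≡ p(f) mod J` for every polynomial `p`. Conversely `ψ g = 0` puts `g` in
`J + (X) ^ k` for every `k`, and `J` is closed: `A⟦X⟧` is Noetherian and `(X)` lies in its
Jacobson radical, so Krull's intersection theorem applies to `A⟦X⟧ ⧸ J`.
-/

theorem Ideal.mem_of_forall_mem_sup_pow {R : Type*} [CommRing R] [IsNoetherianRing R]
    {J M : Ideal R} (hM : M ≤ (⊥ : Ideal R).jacobson) {g : R} (hg : ∀ k, g ∈ J ⊔ M ^ k) :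
    g ∈ J := by
  rw [← Ideal.Quotient.eq_zero_iff_mem]
  refine (IsHausdorff.of_le_jacobson M (R ⧸ J) hM).haus _ fun k => ?_
  obtain ⟨j, hj, m, hm, hjm⟩ := Submodule.mem_sup.mp (hg k)
  have : Ideal.Quotient.mk J g = m • 1 := by
    rw [← hjm, map_add, Ideal.Quotient.eq_zero_iff_mem.mpr hj, zero_add, Algebra.smul_def,
      mul_one, Ideal.Quotient.algebraMap_eq]
  rw [SModEq.zero, this]
  exact Submodule.smul_mem_smul hm trivial

namespace MvPolynomial

variable {σ A : Type*} [CommRing A] (f : σ → A)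

theorem coe_sub (p q : MvPolynomial σ A) :
    ((p - q : MvPolynomial σ A) : MvPowerSeries σ A) = p - q :=
  map_sub coeToMvPowerSeries.ringHom p q

theorem map_aeval_idealOfVars : (idealOfVars σ A).map (aeval f) = Ideal.span (Set.range f) := by
  rw [Ideal.map_span, ← Set.range_comp]
  congr 2
  ext1 i
  simp

theorem aeval_mem_span_range_pow {k : ℕ} {p : MvPolynomial σ A} (hp : p ∈ idealOfVars σ A ^ k) :
    aeval f p ∈ Ideal.span (Set.range f) ^ k := by
  rw [← map_aeval_idealOfVars, ← Ideal.map_pow]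
  exact Ideal.mem_map_of_mem _ hp

theorem exists_mem_idealOfVars_pow_aeval_eq {k : ℕ} {a : A}
    (ha : a ∈ Ideal.span (Set.range f) ^ k) :
    ∃ p ∈ idealOfVars σ A ^ k, aeval f p = a := by
  rwa [← map_aeval_idealOfVars, ← Ideal.map_pow,
    Ideal.mem_map_iff_of_surjective _ fun a => ⟨C a, aeval_C f a⟩] at ha

theorem exists_lift_adicCauchySequence
    (a : AdicCompletion.AdicCauchySequence (Ideal.span (Set.range f)) A) :
    ∃ s : ℕ → MvPolynomial σ A,
      (∀ {m N : ℕ}, m ≤ N → s N - s m ∈ idealOfVars σ A ^ m) ∧ ∀ N, aeval f (s N) = a N := by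
  have hstep (k : ℕ) : a (k + 1) - a k ∈ Ideal.span (Set.range f) ^ k := by
    have := a.mk_eq_mk (Nat.le_succ k)
    rwa [Submodule.Quotient.eq, smul_eq_mul, Ideal.mul_top] at this
  choose q hq haq using fun k => exists_mem_idealOfVars_pow_aeval_eq f (hstep k)
  refine ⟨fun N => C (a 0) + ∑ k ∈ Finset.range N, q k, fun {m N} hmN => ?_, fun N => ?_⟩
  · rw [add_sub_add_left_eq_sub, ← Finset.sum_Ico_eq_sub _ hmN]
    exact Ideal.sum_mem _ fun k hk => Ideal.pow_le_pow_right (Finset.mem_Ico.mp hk).1 (hq k)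
  · simp only [map_add, map_sum, aeval_C, haq, Finset.sum_range_sub]
    simp

end MvPolynomial

namespace MvPowerSeries

variable {σ A : Type*} [CommRing A]

theorem le_order_of_mem_span_X_pow {k : ℕ} {g : MvPowerSeries σ A}
    (hg : g ∈ Ideal.span (Set.range X) ^ k) : (k : ℕ∞) ≤ g.order := by
  induction k generalizing g with
  | zero => simp
  | succ k ih =>
    rw [pow_succ] at hg
    refine Submodule.mul_induction_on hg (fun a ha b hb => ?_) (fun a b ha hb => ?_)
    · refine le_trans ?_ le_order_mul
      push_cast
      refine add_le_add (ih ha) (Submodule.span_induction ?_ (by simp) ?_ ?_ hb)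
      · rintro _ ⟨i, rfl⟩
        exact one_le_order_iff_constCoeff_eq_zero.mpr (constantCoeff_X i)
      · intro x y _ _ hx hy
        exact le_trans (le_min hx hy) min_order_le_add
      · intro a x _ hx
        exact le_trans (le_add_left hx) le_order_mul
    · exact le_trans (le_min ha hb) min_order_le_add

theorem map_coe_idealOfVars :
    (MvPolynomial.idealOfVars σ A).map MvPolynomial.coeToMvPowerSeries.ringHom =
      Ideal.span (Set.range X) := by
  rw [Ideal.map_span, ← Set.range_comp]
  congr 2
  ext1 i
  simp

theorem coe_mem_span_X_pow {k : ℕ} {p : MvPolynomial σ A}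
    (hp : p ∈ MvPolynomial.idealOfVars σ A ^ k) :
    (p : MvPowerSeries σ A) ∈ Ideal.span (Set.range X) ^ k := by
  rw [← map_coe_idealOfVars, ← Ideal.map_pow]
  exact Ideal.mem_map_of_mem _ hp

theorem coe_sub_C_aeval_mem_span (f : σ → A) (p : MvPolynomial σ A) :
    (p : MvPowerSeries σ A) - C (MvPolynomial.aeval f p) ∈
      Ideal.span (Set.range fun i => C (f i) - X i) := by
  rw [← Ideal.Quotient.eq]
  have : (Ideal.Quotient.mk _).comp MvPolynomial.coeToMvPowerSeries.ringHom =
      ((Ideal.Quotient.mk (Ideal.span (Set.range fun i => C (f i) - X i))).comp C).comp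
        (MvPolynomial.aeval f).toRingHom := by
    refine MvPolynomial.ringHom_ext (fun a => by simp) fun i => ?_
    simp only [RingHom.comp_apply, MvPolynomial.coeToMvPowerSeries.ringHom_apply,
      MvPolynomial.coe_X, AlgHom.toRingHom_eq_coe, RingHom.coe_coe, MvPolynomial.aeval_X]
    rw [Ideal.Quotient.eq, ← neg_sub]
    exact neg_mem (Ideal.subset_span ⟨i, rfl⟩)
  exact congr($this p)

variable [Finite σ]

theorem exists_sub_coe_mem_span_X_pow {s : ℕ → MvPolynomial σ A}
    (hs : ∀ {m N : ℕ}, m ≤ N → s N - s m ∈ MvPolynomial.idealOfVars σ A ^ m) :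
    ∃ g : MvPowerSeries σ A, ∀ N, g - s N ∈ Ideal.span (Set.range X) ^ N := by
  obtain ⟨g, hg⟩ := IsPrecomplete.prec
    (I := Ideal.span (Set.range (X : σ → MvPowerSeries σ A))) inferInstance
    (f := fun N => (s N : MvPowerSeries σ A)) fun {m N} hmN => by
      rw [SModEq.sub_mem, smul_eq_mul, Ideal.mul_top, ← neg_sub, neg_mem_iff,
        ← MvPolynomial.coe_sub]
      exact coe_mem_span_X_pow (hs hmN)
  refine ⟨g, fun N => ?_⟩
  have := (hg N).symm
  rwa [SModEq.sub_mem, smul_eq_mul, Ideal.mul_top] at this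

/-- The truncations of `g` converge in the complete ring `A⟦X⟧`, and their limit has the
coefficients of `g`. -/
theorem sub_truncTotal_mem_span_X_pow (k : ℕ) (g : MvPowerSeries σ A) :
    g - (truncTotal k g : MvPowerSeries σ A) ∈ Ideal.span (Set.range X) ^ k := by
  obtain ⟨L, hL⟩ := exists_sub_coe_mem_span_X_pow (s := fun N => truncTotal N g)
    fun hmN => truncTotal_sub_truncTotal_mem_pow_idealOfVars hmN le_rfl g
  have hLg : L = g := by
    ext d
    have hd := coeff_of_lt_order (lt_of_lt_of_le (by exact_mod_cast Nat.lt_succ_self _)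
      (le_order_of_mem_span_X_pow (hL (d.degree + 1))))
    rwa [map_sub, MvPolynomial.coeff_coe, coeff_truncTotal g (Nat.lt_succ_self _), sub_eq_zero]
      at hd
  simpa only [hLg] using hL k

theorem truncTotal_eq_zero_of_mem_span_X_pow {k : ℕ} {g : MvPowerSeries σ A}
    (hg : g ∈ Ideal.span (Set.range X) ^ k) : truncTotal k g = 0 := by
  ext x
  rw [coeff_truncTotal_eq_ite, MvPolynomial.coeff_zero, ite_eq_right_iff]
  exact fun hx => coeff_of_lt_order <| lt_of_lt_of_le (by exact_mod_cast hx)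
    (le_order_of_mem_span_X_pow hg)

variable (f : σ → A)

noncomputable def evalTrunc (k : ℕ) :
    MvPowerSeries σ A →ₐ[A] A ⧸ Ideal.span (Set.range f) ^ k :=
  (Ideal.quotientMapₐ _ (MvPolynomial.aeval f)
      fun _ => MvPolynomial.aeval_mem_span_range_pow f).comp
    ((truncTotalAlgHom σ A k).restrictScalars A)

theorem evalTrunc_apply (k : ℕ) (g : MvPowerSeries σ A) :
    evalTrunc f k g = Ideal.Quotient.mk _ (MvPolynomial.aeval f (truncTotal k g)) :=
  rfl

theorem evalTrunc_coe (k : ℕ) (p : MvPolynomial σ A) :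
    evalTrunc f k p = Ideal.Quotient.mk _ (MvPolynomial.aeval f p) := by
  rw [evalTrunc_apply, Ideal.Quotient.eq, ← map_sub]
  exact MvPolynomial.aeval_mem_span_range_pow f
    (Ideal.Quotient.eq.mp ((truncTotalAlgHom σ A k).commutes p))

theorem evalTrunc_eq_zero_of_mem_span_X_pow {k : ℕ} {g : MvPowerSeries σ A}
    (hg : g ∈ Ideal.span (Set.range X) ^ k) : evalTrunc f k g = 0 := by
  rw [evalTrunc_apply, truncTotal_eq_zero_of_mem_span_X_pow hg, map_zero, map_zero]

theorem factorₐ_comp_evalTrunc {m N : ℕ} (hmN : m ≤ N) :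
    (Ideal.Quotient.factorₐ A (Ideal.pow_le_pow_right hmN)).comp (evalTrunc f N) =
      evalTrunc f m :=
  AlgHom.ext fun g => by
    rw [AlgHom.comp_apply, evalTrunc_apply, evalTrunc_apply, Ideal.Quotient.factorₐ_apply,
      Ideal.Quotient.factor_mk, Ideal.Quotient.eq, ← map_sub]
    exact MvPolynomial.aeval_mem_span_range_pow f
      (truncTotal_sub_truncTotal_mem_pow_idealOfVars hmN le_rfl g)

noncomputable def adicSubst :
    MvPowerSeries σ A →ₐ[A] AdicCompletion (Ideal.span (Set.range f)) A :=
  AdicCompletion.liftAlgHom _ (evalTrunc f) (factorₐ_comp_evalTrunc f)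

theorem evalₐ_adicSubst (k : ℕ) (g : MvPowerSeries σ A) :
    AdicCompletion.evalₐ _ k (adicSubst f g) = evalTrunc f k g :=
  AdicCompletion.evalₐ_liftAlgHom _ _ (factorₐ_comp_evalTrunc f) k g

theorem adicSubst_coe (p : MvPolynomial σ A) :
    adicSubst f p = AdicCompletion.of _ A (MvPolynomial.aeval f p) :=
  AdicCompletion.ext_evalₐ fun k => by
    rw [evalₐ_adicSubst, evalTrunc_coe, AdicCompletion.evalₐ_of]

theorem adicSubst_surjective : Function.Surjective (adicSubst f) := by
  intro x
  obtain ⟨a, rfl⟩ := AdicCompletion.mk_surjective _ A x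
  obtain ⟨s, hs, has⟩ := MvPolynomial.exists_lift_adicCauchySequence f a
  obtain ⟨g, hg⟩ := exists_sub_coe_mem_span_X_pow hs
  refine ⟨g, AdicCompletion.ext_evalₐ fun k => ?_⟩
  rw [evalₐ_adicSubst, AdicCompletion.evalₐ_mk, ← has k, ← evalTrunc_coe, ← sub_eq_zero,
    ← map_sub]
  exact evalTrunc_eq_zero_of_mem_span_X_pow f (hg k)

theorem mem_sup_span_X_pow_of_evalTrunc_eq_zero {k : ℕ} {g : MvPowerSeries σ A}
    (hg : evalTrunc f k g = 0) :
    g ∈ Ideal.span (Set.range fun i => C (f i) - X i) ⊔ Ideal.span (Set.range X) ^ k := by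
  set t := truncTotal k g
  rw [evalTrunc_apply, Ideal.Quotient.eq_zero_iff_mem] at hg
  obtain ⟨q, hq, hqt⟩ := MvPolynomial.exists_mem_idealOfVars_pow_aeval_eq f hg
  have hJ := coe_sub_C_aeval_mem_span f (t - q)
  rw [map_sub, hqt, sub_self, map_zero, sub_zero, MvPolynomial.coe_sub] at hJ
  have hM := add_mem (sub_truncTotal_mem_span_X_pow k g) (coe_mem_span_X_pow hq)
  convert add_mem (Submodule.mem_sup_left hJ) (Submodule.mem_sup_right hM) using 1
  ring

theorem ker_adicSubst [IsNoetherianRing A] :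
    RingHom.ker (adicSubst f) = Ideal.span (Set.range fun i => C (f i) - X i) := by
  refine le_antisymm (fun g hg => ?_) (Ideal.span_le.mpr ?_)
  · refine Ideal.mem_of_forall_mem_sup_pow
      (IsAdicComplete.le_jacobson_bot (Ideal.span (Set.range X))) fun k => ?_
    refine mem_sup_span_X_pow_of_evalTrunc_eq_zero f ?_
    rw [← evalₐ_adicSubst, RingHom.mem_ker.mp hg, map_zero]
  · rintro _ ⟨i, rfl⟩
    dsimp only
    rw [SetLike.mem_coe, RingHom.mem_ker, ← MvPolynomial.coe_C, ← MvPolynomial.coe_X,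
      ← MvPolynomial.coe_sub, adicSubst_coe]
    simp

noncomputable def quotientSpanCSubXEquivAdicCompletion [IsNoetherianRing A] :
    (MvPowerSeries σ A ⧸ Ideal.span (Set.range fun i => C (f i) - X i)) ≃ₐ[A]
      AdicCompletion (Ideal.span (Set.range f)) A :=
  (Ideal.quotientEquivAlgOfEq A (ker_adicSubst f).symm).trans
    (Ideal.quotientKerAlgEquivOfSurjective (adicSubst_surjective f))

end MvPowerSeries

/-- For a Noetherian commutative ring `A` and the ideal `I = (f₁, …, fₙ)`, the `I`-adic
completion of `A` is isomorphic as an `A`-algebra to `A[[ρ₁, …, ρₙ]] / (fᵢ - ρᵢ)`. -/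
theorem stmt_4 (A : Type*) [CommRing A] [IsNoetherianRing A] (n : ℕ) (f : Fin n → A) :
    Nonempty
      (AdicCompletion (Ideal.span (Set.range f)) A ≃ₐ[A]
        (MvPowerSeries (Fin n) A ⧸
          Ideal.span (Set.range fun i : Fin n =>
            MvPowerSeries.C (σ := Fin n) (R := A) (f i) - MvPowerSeries.X i))) :=
  ⟨(MvPowerSeries.quotientSpanCSubXEquivAdicCompletion f).symm⟩
end

section
/- Let A be a commutative Noetherian ring and (A_n)_{n∈ℕ} an inverse system of flat A-algebras with A-algebra transition maps, such that lim←¹ (F ⊗_A A_n) = 0 for every finite free A-module F. Then the functor Θ(M) = lim←_n (M ⊗_A A_n) is exact on the category of finitely generated A-modules. -/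
open scoped TensorProduct

/-- Commutation of `rTensor` and `lTensor`. -/
lemma comm_aux {A : Type} [CommRing A] {P Q C D : Type}
    [AddCommGroup P] [AddCommGroup Q] [AddCommGroup C] [AddCommGroup D]
    [Module A P] [Module A Q] [Module A C] [Module A D]
    (φ : P →ₗ[A] Q) (ψ : D →ₗ[A] C) (x : P ⊗[A] D) :
    LinearMap.rTensor C φ (LinearMap.lTensor P ψ x)
      = LinearMap.lTensor Q ψ (LinearMap.rTensor D φ x) := by
  induction x using TensorProduct.induction_on with
  | zero => simp
  | tmul p d => simp
  | add a b ha hb => simp [map_add, ha, hb]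

/-- `lim¹ (N ⊗ Bₙ) = 0` for any finitely generated `N`. -/
lemma lim1_fg {A : Type} [CommRing A]
    (B : ℕ → Type) [∀ n, CommRing (B n)] [∀ n, Algebra A (B n)]
    (σ : ∀ n, B (n + 1) →ₐ[A] B n)
    (hlim1 : ∀ k : ℕ, Function.Surjective
      (fun a : ∀ n, (Fin k → A) ⊗[A] B n =>
        (fun n => a n - LinearMap.lTensor (Fin k → A) (σ n).toLinearMap (a (n + 1)) :
          ∀ n, (Fin k → A) ⊗[A] B n)))
    (N : Type) [AddCommGroup N] [Module A N] [Module.Finite A N]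
    (s : ∀ n, N ⊗[A] B n) :
    ∃ c : ∀ n, N ⊗[A] B n,
      ∀ n, c n - LinearMap.lTensor N (σ n).toLinearMap (c (n + 1)) = s n := by
  obtain ⟨k, p, hp⟩ := Module.Finite.exists_fin' A N
  have hsurj : ∀ n, Function.Surjective (LinearMap.rTensor (B n) p) :=
    fun n => LinearMap.rTensor_surjective (B n) hp
  choose shat hshat using fun n => hsurj n (s n)
  obtain ⟨x, hx⟩ := hlim1 k shat
  refine ⟨fun n => LinearMap.rTensor (B n) p (x n), fun n => ?_⟩
  have hxn := congrFun hx n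
  simp only at hxn
  calc LinearMap.rTensor (B n) p (x n)
        - LinearMap.lTensor N (σ n).toLinearMap (LinearMap.rTensor (B (n+1)) p (x (n+1)))
      = LinearMap.rTensor (B n) p (x n)
        - LinearMap.rTensor (B n) p
            (LinearMap.lTensor (Fin k → A) (σ n).toLinearMap (x (n+1))) := by
        rw [comm_aux]
    _ = LinearMap.rTensor (B n) p
          (x n - LinearMap.lTensor (Fin k → A) (σ n).toLinearMap (x (n+1))) := by
        rw [map_sub]
    _ = s n := by rw [hxn, hshat]

/-- Let `A` be Noetherian and `(Bₙ)` an inverse system of flat `A`-algebras with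
`lim¹ (F ⊗_A Bₙ) = 0` for every finite free `A`-module `F`. Then the functor
`Θ(M) = lim←ₙ (M ⊗_A Bₙ)` is exact on short exact sequences of finitely generated
`A`-modules. -/
theorem stmt_10 (A : Type) [CommRing A] [IsNoetherianRing A]
    (B : ℕ → Type) [∀ n, CommRing (B n)] [∀ n, Algebra A (B n)] [∀ n, Module.Flat A (B n)]
    (σ : ∀ n, B (n + 1) →ₐ[A] B n)
    (hlim1 : ∀ k : ℕ, Function.Surjective
      (fun a : ∀ n, (Fin k → A) ⊗[A] B n =>
        (fun n => a n - LinearMap.lTensor (Fin k → A) (σ n).toLinearMap (a (n + 1)) :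
          ∀ n, (Fin k → A) ⊗[A] B n)))
    (M' M M'' : Type) [AddCommGroup M'] [AddCommGroup M] [AddCommGroup M'']
    [Module A M'] [Module A M] [Module A M'']
    [Module.Finite A M'] [Module.Finite A M] [Module.Finite A M'']
    (f : M' →ₗ[A] M) (g : M →ₗ[A] M'')
    (hf : Function.Injective f) (hfg : Function.Exact f g) (hg : Function.Surjective g) :
    (∀ s : ∀ n, M' ⊗[A] B n,
      (∀ n, LinearMap.lTensor M' (σ n).toLinearMap (s (n + 1)) = s n) →
      (∀ n, LinearMap.rTensor (B n) f (s n) = 0) → s = 0) ∧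
    (∀ t : ∀ n, M ⊗[A] B n,
      (∀ n, LinearMap.lTensor M (σ n).toLinearMap (t (n + 1)) = t n) →
      (∀ n, LinearMap.rTensor (B n) g (t n) = 0) →
      ∃ s : ∀ n, M' ⊗[A] B n,
        (∀ n, LinearMap.lTensor M' (σ n).toLinearMap (s (n + 1)) = s n) ∧
        ∀ n, LinearMap.rTensor (B n) f (s n) = t n) ∧
    (∀ u : ∀ n, M'' ⊗[A] B n,
      (∀ n, LinearMap.lTensor M'' (σ n).toLinearMap (u (n + 1)) = u n) →
      ∃ t : ∀ n, M ⊗[A] B n,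
        (∀ n, LinearMap.lTensor M (σ n).toLinearMap (t (n + 1)) = t n) ∧
        ∀ n, LinearMap.rTensor (B n) g (t n) = u n) := by
  have hfinj : ∀ n, Function.Injective (LinearMap.rTensor (B n) f) :=
    fun n => Module.Flat.rTensor_preserves_injective_linearMap f hf
  have hexact : ∀ n, Function.Exact (LinearMap.rTensor (B n) f) (LinearMap.rTensor (B n) g) :=
    fun n => Module.Flat.rTensor_exact (B n) hfg
  have hgsurj : ∀ n, Function.Surjective (LinearMap.rTensor (B n) g) :=
    fun n => LinearMap.rTensor_surjective (B n) hg
  refine ⟨?_, ?_, ?_⟩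
  · -- injectivity
    intro s _ h0
    funext n
    refine hfinj n ?_
    rw [h0 n, Pi.zero_apply, map_zero]
  · -- exactness in the middle
    intro t hcomp h0
    have : ∀ n, ∃ x, LinearMap.rTensor (B n) f x = t n := fun n =>
      (hexact n (t n)).mp (h0 n)
    choose s hs using this
    refine ⟨s, fun n => ?_, hs⟩
    apply hfinj n
    rw [hs n]
    calc LinearMap.rTensor (B n) f (LinearMap.lTensor M' (σ n).toLinearMap (s (n+1)))
        = LinearMap.lTensor M (σ n).toLinearMap (LinearMap.rTensor (B (n+1)) f (s (n+1))) :=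
          comm_aux _ _ _
      _ = t n := by rw [hs (n+1), hcomp n]
  · -- surjectivity
    intro u hcomp
    choose t0 ht0 using fun n => hgsurj n (u n)
    have hge : ∀ n, LinearMap.rTensor (B n) g
        (t0 n - LinearMap.lTensor M (σ n).toLinearMap (t0 (n+1))) = 0 := by
      intro n
      rw [map_sub, ht0 n, comm_aux, ht0 (n+1), hcomp n, sub_self]
    have : ∀ n, ∃ x, LinearMap.rTensor (B n) f x
        = t0 n - LinearMap.lTensor M (σ n).toLinearMap (t0 (n+1)) := fun n =>
      (hexact n _).mp (hge n)
    choose s hs using this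
    obtain ⟨c, hc⟩ := lim1_fg B σ hlim1 M' s
    refine ⟨fun n => t0 n - LinearMap.rTensor (B n) f (c n), fun n => ?_, fun n => ?_⟩
    · have key : LinearMap.rTensor (B n) f (c n)
          - LinearMap.lTensor M (σ n).toLinearMap
              (LinearMap.rTensor (B (n+1)) f (c (n+1)))
          = t0 n - LinearMap.lTensor M (σ n).toLinearMap (t0 (n+1)) := by
        rw [← comm_aux, ← map_sub, hc n, hs n]
      simp only [map_sub]
      rw [sub_eq_sub_iff_add_eq_add] at key ⊢
      rw [add_comm] at key
      linear_combination (norm := abel) key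
    · rw [map_sub, ht0 n, (hexact n).apply_apply_eq_zero (c n), sub_zero]
end

section
/- Let A be a Noetherian commutative ring, (A_n) an inverse system of flat A-algebras with lim←¹ A_n = 0, and set B = lim← A_n. Then for every finitely generated A-module M, the natural map M ⊗_A B → lim←_n (M ⊗_A A_n) is an isomorphism. -/
open scoped TensorProduct
open LinearMap

lemma tensor_comm_apply {A : Type} [CommRing A] {M N P Q : Type}
    [AddCommGroup M] [Module A M] [AddCommGroup N] [Module A N]
    [AddCommGroup P] [Module A P] [AddCommGroup Q] [Module A Q]
    (f : M →ₗ[A] P) (g : N →ₗ[A] Q) (z : M ⊗[A] N) :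
    LinearMap.lTensor P g (LinearMap.rTensor N f z)
      = LinearMap.rTensor Q f (LinearMap.lTensor M g z) := by
  rw [← LinearMap.comp_apply, ← LinearMap.comp_apply,
    LinearMap.lTensor_comp_rTensor, LinearMap.rTensor_comp_lTensor]

section Pie

variable (A : Type) [CommRing A] (k : ℕ)
variable (C : Type) [AddCommGroup C] [Module A C]

/-- The natural map `(Fin k → A) ⊗ C → (Fin k → C)`. -/
noncomputable def pie : ((Fin k → A) ⊗[A] C) →ₗ[A] (Fin k → C) :=
  LinearMap.pi fun i => (TensorProduct.lid A C).toLinearMap ∘ₗ rTensor C (proj i)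

/-- The inverse of `pie`. -/
noncomputable def pieInv : (Fin k → C) →ₗ[A] ((Fin k → A) ⊗[A] C) :=
  ∑ i, (TensorProduct.mk A (Fin k → A) C (Pi.single i 1)) ∘ₗ proj i

variable {A k C}

lemma pie_tmul (f : Fin k → A) (c : C) (i : Fin k) :
    pie A k C (f ⊗ₜ c) i = f i • c := by
  simp [pie]

lemma pieInv_apply (g : Fin k → C) :
    pieInv A k C g = ∑ i, (Pi.single i 1 : Fin k → A) ⊗ₜ g i := by
  simp [pieInv]

lemma pie_pieInv (g : Fin k → C) : pie A k C (pieInv A k C g) = g := by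
  funext j
  rw [pieInv_apply]
  simp only [map_sum]
  rw [Finset.sum_apply]
  simp only [pie_tmul]
  rw [Finset.sum_eq_single j]
  · simp
  · intro i _ hij
    simp [Pi.single_apply, Ne.symm hij]
  · simp

lemma pieInv_pie (x : (Fin k → A) ⊗[A] C) : pieInv A k C (pie A k C x) = x := by
  induction x using TensorProduct.induction_on with
  | zero => simp
  | tmul f c =>
    rw [pieInv_apply]
    simp only [pie_tmul]
    have : ∀ i : Fin k, (Pi.single i 1 : Fin k → A) ⊗ₜ[A] (f i • c)
        = (Pi.single i (f i) : Fin k → A) ⊗ₜ[A] c := by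
      intro i
      rw [← TensorProduct.smul_tmul]
      congr 1
      funext j
      simp [Pi.single_apply, mul_comm]
    simp only [this]
    rw [← TensorProduct.sum_tmul]
    congr 1
    exact Finset.univ_sum_single f
  | add x y hx hy => rw [map_add, map_add, hx, hy]

lemma pie_injective : Function.Injective (pie A k C) := by
  intro x y h
  rw [← pieInv_pie (C := C) x, h, pieInv_pie]

lemma pie_natural {C' : Type} [AddCommGroup C'] [Module A C'] (φ : C →ₗ[A] C')
    (x : (Fin k → A) ⊗[A] C) (i : Fin k) :
    pie A k C' (lTensor (Fin k → A) φ x) i = φ (pie A k C x i) := by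
  induction x using TensorProduct.induction_on with
  | zero => simp
  | tmul f c => simp [pie_tmul]
  | add x y hx hy => simp only [map_add, Pi.add_apply, hx, hy]

end Pie

section Main

variable {A : Type} [CommRing A]
variable {Bn : ℕ → Type} [∀ n, CommRing (Bn n)] [∀ n, Algebra A (Bn n)]
variable {σ : ∀ n, Bn (n + 1) →ₐ[A] Bn n}

/-- `lim¹ (N ⊗ Bₙ) = 0` for finitely generated `N`. -/
lemma aux_lim1
    (hlim1 : Function.Surjective
      (fun a : ∀ n, Bn n => (fun n => a n - σ n (a (n + 1)) : ∀ n, Bn n)))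
    (N : Type) [AddCommGroup N] [Module A N] [Module.Finite A N]
    (v : ∀ n, N ⊗[A] Bn n) :
    ∃ w : ∀ n, N ⊗[A] Bn n,
      ∀ n, w n - lTensor N (σ n).toLinearMap (w (n + 1)) = v n := by
  obtain ⟨k, g, hg⟩ := Module.Finite.exists_fin' A N
  have hsurj : ∀ n, Function.Surjective (rTensor (Bn n) g) :=
    fun n => rTensor_surjective _ hg
  choose v' hv' using fun n => hsurj n (v n)
  -- solve in the free module componentwise
  have : ∀ i : Fin k, ∃ b : ∀ n, Bn n,
      ∀ n, b n - σ n (b (n + 1)) = pie A k (Bn n) (v' n) i := by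
    intro i
    obtain ⟨b, hb⟩ := hlim1 (fun n => pie A k (Bn n) (v' n) i)
    exact ⟨b, fun n => congrFun hb n⟩
  choose b hb using this
  set w' : ∀ n, (Fin k → A) ⊗[A] Bn n := fun n => pieInv A k (Bn n) (fun i => b i n)
  have hw' : ∀ n, w' n - lTensor (Fin k → A) (σ n).toLinearMap (w' (n + 1)) = v' n := by
    intro n
    apply pie_injective
    funext i
    rw [map_sub]
    simp only [Pi.sub_apply, pie_natural, w', pie_pieInv]
    exact hb i n
  refine ⟨fun n => rTensor (Bn n) g (w' n), fun n => ?_⟩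
  rw [← hv' n, ← hw' n, map_sub, ← tensor_comm_apply g (σ n).toLinearMap (w' (n + 1))]

/-- Surjectivity onto the inverse limit, for finitely generated modules. -/
lemma aux_surj [IsNoetherianRing A]
    (hlim1 : Function.Surjective
      (fun a : ∀ n, Bn n => (fun n => a n - σ n (a (n + 1)) : ∀ n, Bn n)))
    {B : Type} [CommRing B] [Algebra A B]
    {p : ∀ n, B →ₐ[A] Bn n}
    (hrange : Set.range (fun x : B => (fun n => p n x : ∀ n, Bn n)) =
      {a : ∀ n, Bn n | ∀ n, σ n (a (n + 1)) = a n})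
    (N : Type) [AddCommGroup N] [Module A N] [Module.Finite A N]
    (s : ∀ n, N ⊗[A] Bn n)
    (hs : ∀ n, lTensor N (σ n).toLinearMap (s (n + 1)) = s n) :
    ∃ x : N ⊗[A] B, ∀ n, lTensor N (p n).toLinearMap x = s n := by
  obtain ⟨k, g, hg⟩ := Module.Finite.exists_fin' A N
  set K := LinearMap.ker g
  set i : K →ₗ[A] (Fin k → A) := K.subtype
  have hKfin : Module.Finite A K :=
    Module.Finite.iff_fg.mpr (IsNoetherian.noetherian K)
  -- lift s levelwise
  choose t ht using fun n => rTensor_surjective (Bn n) (g := g) hg (s n)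
  set u : ∀ n, (Fin k → A) ⊗[A] Bn n :=
    fun n => t n - lTensor (Fin k → A) (σ n).toLinearMap (t (n + 1))
  have hcomm : ∀ n (z : (Fin k → A) ⊗[A] Bn (n + 1)),
      rTensor (Bn n) g (lTensor (Fin k → A) (σ n).toLinearMap z)
        = lTensor N (σ n).toLinearMap (rTensor (Bn (n + 1)) g z) := by
    intro n z
    exact (tensor_comm_apply g (σ n).toLinearMap z).symm
  have hu0 : ∀ n, rTensor (Bn n) g (u n) = 0 := by
    intro n
    simp only [u, map_sub, ht, hcomm, hs]
    exact sub_self _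
  have hexact : ∀ n, Function.Exact (rTensor (Bn n) i) (rTensor (Bn n) g) :=
    fun n => rTensor_exact (Bn n) (g.exact_subtype_ker_map) hg
  have hmem : ∀ n, ∃ vn : K ⊗[A] Bn n, rTensor (Bn n) i vn = u n := by
    intro n
    exact ((hexact n) (u n)).mp (hu0 n)
  choose v hv using hmem
  obtain ⟨w, hw⟩ := aux_lim1 hlim1 K v
  set t' : ∀ n, (Fin k → A) ⊗[A] Bn n := fun n => t n - rTensor (Bn n) i (w n)
  have hicomm : ∀ n (z : K ⊗[A] Bn (n + 1)),
      lTensor (Fin k → A) (σ n).toLinearMap (rTensor (Bn (n + 1)) i z)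
        = rTensor (Bn n) i (lTensor K (σ n).toLinearMap z) := by
    intro n z
    exact tensor_comm_apply i (σ n).toLinearMap z
  have ht' : ∀ n, lTensor (Fin k → A) (σ n).toLinearMap (t' (n + 1)) = t' n := by
    intro n
    have : t' n - lTensor (Fin k → A) (σ n).toLinearMap (t' (n + 1))
        = u n - rTensor (Bn n) i (w n - lTensor K (σ n).toLinearMap (w (n + 1))) := by
      simp only [t', u, map_sub, hicomm]
      abel
    rw [hw n, hv n, sub_self] at this
    exact (sub_eq_zero.mp this).symm
  -- pass to components and use hrange
  have hc : ∀ ii : Fin k, ∃ bb : B, ∀ n, p n bb = pie A k (Bn n) (t' n) ii := by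
    intro ii
    have : (fun n => pie A k (Bn n) (t' n) ii) ∈
        {a : ∀ n, Bn n | ∀ n, σ n (a (n + 1)) = a n} := by
      intro n
      have := pie_natural (σ n).toLinearMap (t' (n + 1)) ii
      rw [ht' n] at this
      exact this.symm
    rw [← hrange] at this
    obtain ⟨bb, hbb⟩ := this
    exact ⟨bb, fun n => congrFun hbb n⟩
  choose bb hbb using hc
  set x' : (Fin k → A) ⊗[A] B := pieInv A k B bb
  have hx' : ∀ n, lTensor (Fin k → A) (p n).toLinearMap x' = t' n := by
    intro n
    apply pie_injective
    funext ii
    rw [pie_natural]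
    simp only [x', pie_pieInv]
    exact hbb ii n
  refine ⟨rTensor B g x', fun n => ?_⟩
  have : lTensor N (p n).toLinearMap (rTensor B g x')
      = rTensor (Bn n) g (lTensor (Fin k → A) (p n).toLinearMap x') :=
    tensor_comm_apply g (p n).toLinearMap x'
  rw [this, hx' n]
  simp only [t', map_sub, ht]
  have : rTensor (Bn n) g (rTensor (Bn n) i (w n)) = 0 := by
    rw [← LinearMap.comp_apply, ← rTensor_comp]
    have hgi : g ∘ₗ i = 0 := by
      ext z
      exact z.2
    rw [hgi, rTensor_zero, LinearMap.zero_apply]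
  rw [this, sub_zero]

end Main

/-- Let `A` be Noetherian, `(Bₙ)` an inverse system of flat `A`-algebras with `lim¹ Bₙ = 0`, and
`B = lim← Bₙ`. Then for every finitely generated `A`-module `M`, the natural map
`M ⊗_A B → lim←ₙ (M ⊗_A Bₙ)` is an isomorphism (injective with image the compatible
sequences). -/
theorem stmt_11 (A : Type) [CommRing A] [IsNoetherianRing A]
    (Bn : ℕ → Type) [∀ n, CommRing (Bn n)] [∀ n, Algebra A (Bn n)] [∀ n, Module.Flat A (Bn n)]
    (σ : ∀ n, Bn (n + 1) →ₐ[A] Bn n)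
    (hlim1 : Function.Surjective
      (fun a : ∀ n, Bn n => (fun n => a n - σ n (a (n + 1)) : ∀ n, Bn n)))
    (B : Type) [CommRing B] [Algebra A B]
    (p : ∀ n, B →ₐ[A] Bn n)
    (hp : ∀ n, ∀ x : B, σ n (p (n + 1) x) = p n x)
    (hinj : Function.Injective (fun x : B => (fun n => p n x : ∀ n, Bn n)))
    (hrange : Set.range (fun x : B => (fun n => p n x : ∀ n, Bn n)) =
      {a : ∀ n, Bn n | ∀ n, σ n (a (n + 1)) = a n})
    (M : Type) [AddCommGroup M] [Module A M] [Module.Finite A M] :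
    Function.Injective
      (fun x : M ⊗[A] B => (fun n => LinearMap.lTensor M (p n).toLinearMap x :
        ∀ n, M ⊗[A] Bn n)) ∧
    Set.range (fun x : M ⊗[A] B => (fun n => LinearMap.lTensor M (p n).toLinearMap x :
        ∀ n, M ⊗[A] Bn n)) =
      {s : ∀ n, M ⊗[A] Bn n | ∀ n, LinearMap.lTensor M (σ n).toLinearMap (s (n + 1)) = s n} := by
  have hpcomp : ∀ (N : Type) [AddCommGroup N] [Module A N] (n : ℕ) (x : N ⊗[A] B),
      lTensor N (σ n).toLinearMap (lTensor N (p (n + 1)).toLinearMap x)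
        = lTensor N (p n).toLinearMap x := by
    intro N _ _ n x
    rw [← LinearMap.comp_apply, ← lTensor_comp]
    have h : (σ n).toLinearMap ∘ₗ (p (n + 1)).toLinearMap = (p n).toLinearMap := by
      ext b
      exact hp n b
    rw [h]
  constructor
  · -- injectivity
    have key : ∀ x : M ⊗[A] B, (∀ n, lTensor M (p n).toLinearMap x = 0) → x = 0 := by
      intro x hx
      obtain ⟨k, g, hg⟩ := Module.Finite.exists_fin' A M
      set K := LinearMap.ker g
      set i : K →ₗ[A] (Fin k → A) := K.subtype
      have hKfin : Module.Finite A K :=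
        Module.Finite.iff_fg.mpr (IsNoetherian.noetherian K)
      obtain ⟨y, hy⟩ := rTensor_surjective B (g := g) hg x
      have hy0 : ∀ n, rTensor (Bn n) g (lTensor (Fin k → A) (p n).toLinearMap y) = 0 := by
        intro n
        rw [← tensor_comm_apply g (p n).toLinearMap y, hy]
        exact hx n
      have hexact : ∀ n, Function.Exact (rTensor (Bn n) i) (rTensor (Bn n) g) :=
        fun n => rTensor_exact (Bn n) (g.exact_subtype_ker_map) hg
      have hmem : ∀ n, ∃ vn : K ⊗[A] Bn n,
          rTensor (Bn n) i vn = lTensor (Fin k → A) (p n).toLinearMap y :=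
        fun n => ((hexact n) _).mp (hy0 n)
      choose v hv using hmem
      have hiinj : ∀ n, Function.Injective (rTensor (Bn n) i) := fun n =>
        Module.Flat.rTensor_preserves_injective_linearMap i (Submodule.injective_subtype K)
      have hvcompat : ∀ n, lTensor K (σ n).toLinearMap (v (n + 1)) = v n := by
        intro n
        apply hiinj n
        rw [← tensor_comm_apply i (σ n).toLinearMap (v (n + 1)), hv (n + 1), hv n]
        exact hpcomp _ n y
      obtain ⟨z, hz⟩ := aux_surj hlim1 hrange K v hvcompat
      have hy' : ∀ n, lTensor (Fin k → A) (p n).toLinearMap (y - rTensor B i z) = 0 := by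
        intro n
        rw [map_sub, tensor_comm_apply i (p n).toLinearMap z, hz n, hv n, sub_self]
      have hy'0 : y - rTensor B i z = 0 := by
        apply pie_injective (C := B)
        funext j
        rw [map_zero]
        apply hinj
        funext n
        have := pie_natural (p n).toLinearMap (y - rTensor B i z) j
        rw [hy' n] at this
        simpa using this.symm
      have : x = rTensor B g (rTensor B i z) := by
        rw [← hy, ← sub_eq_zero, ← map_sub, hy'0, map_zero]
      rw [this, ← LinearMap.comp_apply, ← rTensor_comp]
      have hgi : g ∘ₗ i = 0 := by
        ext w
        exact w.2
      rw [hgi, rTensor_zero, LinearMap.zero_apply]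
    intro x y hxy
    rw [← sub_eq_zero]
    apply key
    intro n
    rw [map_sub, sub_eq_zero]
    exact congrFun hxy n
  · -- range
    ext s
    constructor
    · rintro ⟨x, rfl⟩ n
      exact hpcomp M n x
    · intro hs
      obtain ⟨x, hx⟩ := aux_surj hlim1 hrange M s hs
      exact ⟨x, funext hx⟩
end
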